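/- Let A be a bounded linear operator on H. Then ber(Re(A))² + ber(Im(A))² + c(Re(A))² + c(Im(A))² ≤ 2·ber(A)² ≤ 2·‖A‖_ber². -/

import Mathlib

set_option synthInstance.maxHeartbeats 1000000
set_option maxHeartbeats 1000000

open scoped NNReal
open ContinuousLinearMap

/-- The Berezin number of an operator `T`, relative to the family `k` of
(normalized reproducing kernel) vectors indexed by `Ω`. -/
noncomputable def ber {H : Type*} [NormedAddCommGroup H] [InnerProductSpace ℂ H]
    {Ω : Type*} (k : Ω → H) (T : H →L[ℂ] H) : ℝ :=
  ⨆ lam : Ω, ‖(inner ℂ (T (k lam)) (k lam) : ℂ)‖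

/-- The absolute value `|T| = (T*T)^(1/2)` of a bounded operator. -/
noncomputable def opAbs {H : Type*} [NormedAddCommGroup H] [InnerProductSpace ℂ H]
    [CompleteSpace H] (T : H →L[ℂ] H) : H →L[ℂ] H :=
  CFC.sqrt (adjoint T * T)

/-- The Berezin norm of an operator. -/
noncomputable def berNorm {H : Type*} [NormedAddCommGroup H] [InnerProductSpace ℂ H]
    {Ω : Type*} (k : Ω → H) (T : H →L[ℂ] H) : ℝ :=
  ⨆ p : Ω × Ω, ‖(inner ℂ (T (k p.1)) (k p.2) : ℂ)‖

/-- The quantity `c(T) = inf_λ |⟨T k̂_λ, k̂_λ⟩|`. -/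
noncomputable def cber {H : Type*} [NormedAddCommGroup H] [InnerProductSpace ℂ H]
    {Ω : Type*} (k : Ω → H) (T : H →L[ℂ] H) : ℝ :=
  ⨅ lam : Ω, ‖(inner ℂ (T (k lam)) (k lam) : ℂ)‖


/-!
Writing `a λ = ⟪A k̂_λ, k̂_λ⟫`, the Berezin symbols of `Re A` and `Im A` are `re (a λ)` and
`-im (a λ)` (Mathlib's inner product is conjugate-linear on the left). Hence for every `λ`,
`|re (a λ)|² + c(Im A)² ≤ |re (a λ)|² + |im (a λ)|² = |a λ|² ≤ ber(A)²`, and taking the supremum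
over `λ` gives `ber(Re A)² + c(Im A)² ≤ ber(A)²`; symmetrically `ber(Im A)² + c(Re A)² ≤ ber(A)²`.
-/

theorem iSup_sq_add_iInf_sq_le {ι : Sort*} [Nonempty ι] {f g : ι → ℝ} {B : ℝ}
    (hg : ∀ i, 0 ≤ g i) (h : ∀ i, f i ^ 2 + g i ^ 2 ≤ B) :
    (⨆ i, f i) ^ 2 + (⨅ i, g i) ^ 2 ≤ B := by
  set c := ⨅ i, g i
  have hc : ∀ i, c ^ 2 ≤ g i ^ 2 := fun i =>
    pow_le_pow_left₀ (Real.iInf_nonneg hg) (ciInf_le ⟨0, Set.forall_mem_range.2 hg⟩ i) 2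
  have hf : ∀ i, f i ^ 2 ≤ B - c ^ 2 := fun i => by linarith [h i, hc i]
  obtain ⟨i₀⟩ := ‹Nonempty ι›
  have hB : 0 ≤ B - c ^ 2 := (sq_nonneg _).trans (hf i₀)
  have hf' : ∀ i, -√(B - c ^ 2) ≤ f i ∧ f i ≤ √(B - c ^ 2) := fun i => (Real.sq_le hB).1 (hf i)
  have hsup : (⨆ i, f i) ^ 2 ≤ B - c ^ 2 := (Real.sq_le hB).2
    ⟨(hf' i₀).1.trans (le_ciSup ⟨_, Set.forall_mem_range.2 fun i => (hf' i).2⟩ i₀),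
      ciSup_le fun i => (hf' i).2⟩
  linarith

section Berezin

variable {H : Type*} [NormedAddCommGroup H] [InnerProductSpace ℂ H] {Ω : Type*} {k : Ω → H}

theorem norm_inner_apply_le_opNorm (T : H →L[ℂ] H) {x y : H} (hx : ‖x‖ ≤ 1) (hy : ‖y‖ ≤ 1) :
    ‖(inner ℂ (T x) y : ℂ)‖ ≤ ‖T‖ :=
  calc ‖(inner ℂ (T x) y : ℂ)‖ ≤ ‖T x‖ * ‖y‖ := norm_inner_le_norm _ _
    _ ≤ ‖T x‖ := mul_le_of_le_one_right (norm_nonneg _) hy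
    _ ≤ ‖T‖ := T.unit_le_opNorm x hx

theorem norm_inner_le_ber (hk : ∀ lam, ‖k lam‖ ≤ 1) (T : H →L[ℂ] H) (lam : Ω) :
    ‖(inner ℂ (T (k lam)) (k lam) : ℂ)‖ ≤ ber k T :=
  le_ciSup ⟨‖T‖, Set.forall_mem_range.2 fun μ => norm_inner_apply_le_opNorm T (hk μ) (hk μ)⟩ lam

theorem ber_nonneg (T : H →L[ℂ] H) : 0 ≤ ber k T :=
  Real.iSup_nonneg fun _ => norm_nonneg _

theorem ber_le_berNorm (hk : ∀ lam, ‖k lam‖ ≤ 1) (T : H →L[ℂ] H) : ber k T ≤ berNorm k T := by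
  have hbdd : BddAbove (Set.range fun p : Ω × Ω => ‖(inner ℂ (T (k p.1)) (k p.2) : ℂ)‖) :=
    ⟨‖T‖, Set.forall_mem_range.2 fun p => norm_inner_apply_le_opNorm T (hk p.1) (hk p.2)⟩
  exact Real.iSup_le (fun lam => le_ciSup hbdd (lam, lam)) (Real.iSup_nonneg fun _ => norm_nonneg _)

variable [CompleteSpace H]

theorem inner_re_part_apply_self (A : H →L[ℂ] H) (x : H) :
    (inner ℂ (((2 : ℝ)⁻¹ • (A + adjoint A)) x) x : ℂ) = ((inner ℂ (A x) x : ℂ).re : ℂ) := by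
  rw [smul_apply, add_apply, RCLike.real_smul_eq_coe_smul (K := ℂ), inner_smul_left,
    inner_add_left, adjoint_inner_left, ← inner_conj_symm x (A x), Complex.add_conj]
  simp only [map_inv₀, map_ofNat]
  push_cast
  ring

theorem inner_im_part_apply_self (A : H →L[ℂ] H) (x : H) :
    (inner ℂ ((((2 * Complex.I)⁻¹ : ℂ) • (A - adjoint A)) x) x : ℂ)
      = -((inner ℂ (A x) x : ℂ).im : ℂ) := by
  rw [smul_apply, sub_apply, inner_smul_left, inner_sub_left, adjoint_inner_left,
    ← inner_conj_symm x (A x), Complex.sub_conj]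
  simp only [map_inv₀, map_mul, map_ofNat, Complex.conj_I]
  push_cast
  field_simp

theorem ber_re_part (A : H →L[ℂ] H) :
    ber k ((2 : ℝ)⁻¹ • (A + adjoint A)) = ⨆ lam, |(inner ℂ (A (k lam)) (k lam) : ℂ).re| := by
  simp only [ber, inner_re_part_apply_self, Complex.norm_real, Real.norm_eq_abs]

theorem cber_re_part (A : H →L[ℂ] H) :
    cber k ((2 : ℝ)⁻¹ • (A + adjoint A)) = ⨅ lam, |(inner ℂ (A (k lam)) (k lam) : ℂ).re| := by
  simp only [cber, inner_re_part_apply_self, Complex.norm_real, Real.norm_eq_abs]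

theorem ber_im_part (A : H →L[ℂ] H) :
    ber k (((2 * Complex.I)⁻¹ : ℂ) • (A - adjoint A))
      = ⨆ lam, |(inner ℂ (A (k lam)) (k lam) : ℂ).im| := by
  simp only [ber, inner_im_part_apply_self, norm_neg, Complex.norm_real, Real.norm_eq_abs]

theorem cber_im_part (A : H →L[ℂ] H) :
    cber k (((2 * Complex.I)⁻¹ : ℂ) • (A - adjoint A))
      = ⨅ lam, |(inner ℂ (A (k lam)) (k lam) : ℂ).im| := by
  simp only [cber, inner_im_part_apply_self, norm_neg, Complex.norm_real, Real.norm_eq_abs]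

end Berezin

theorem berezin_cartesian_decomposition_bound
    {H : Type*} [NormedAddCommGroup H] [InnerProductSpace ℂ H] [CompleteSpace H]
    {Ω : Type*} [Nonempty Ω] (k : Ω → H) (hk : ∀ lam, ‖k lam‖ = 1)
    (A : H →L[ℂ] H) :
    ber k ((2 : ℝ)⁻¹ • (A + adjoint A)) ^ 2
        + ber k (((2 * Complex.I)⁻¹ : ℂ) • (A - adjoint A)) ^ 2
        + cber k ((2 : ℝ)⁻¹ • (A + adjoint A)) ^ 2
        + cber k (((2 * Complex.I)⁻¹ : ℂ) • (A - adjoint A)) ^ 2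
      ≤ 2 * ber k A ^ 2 ∧
    2 * ber k A ^ 2 ≤ 2 * berNorm k A ^ 2 := by
  set a : Ω → ℂ := fun lam => inner ℂ (A (k lam)) (k lam)
  have hk' : ∀ lam, ‖k lam‖ ≤ 1 := fun lam => (hk lam).le
  have hsq : ∀ lam, |(a lam).re| ^ 2 + |(a lam).im| ^ 2 ≤ ber k A ^ 2 := fun lam =>
    calc |(a lam).re| ^ 2 + |(a lam).im| ^ 2 = ‖a lam‖ ^ 2 := by
          rw [sq_abs, sq_abs, Complex.sq_norm, Complex.normSq_apply]; ring
      _ ≤ ber k A ^ 2 := pow_le_pow_left₀ (norm_nonneg _) (norm_inner_le_ber hk' A lam) 2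
  have hre := iSup_sq_add_iInf_sq_le (fun lam => abs_nonneg (a lam).im) hsq
  have him := iSup_sq_add_iInf_sq_le (fun lam => abs_nonneg (a lam).re)
    fun lam => (add_comm _ _).le.trans (hsq lam)
  rw [ber_re_part, ber_im_part, cber_re_part, cber_im_part]
  exact ⟨by linarith, by gcongr; exacts [ber_nonneg A, ber_le_berNorm hk' A]⟩
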